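/- (Minimal weight characterization for K-restricted solid-on-solid.) Fix an integer K ≥ 1. Define the K-RSOS dynamics: given H : ℤ^d → ℤ and an update list u = (u_1, …, u_n), set f_0 = H and, for 1 ≤ k ≤ n, f_k agrees with f_{k−1} except possibly at u_k, where f_k(u_k) = f_{k−1}(u_k) + 1 if f_{k−1}(u_k) + 1 ≤ f_{k−1}(u_k + e) + K for every e ∈ N, and f_k(u_k) = f_{k−1}(u_k) otherwise. For a lattice path γ for u starting at x, define the K-weight W_K(γ) as the number of indices 1 ≤ k ≤ n with γ(k) = u_k and γ(k−1) = γ(k) (vertical updates), plus K times the number of indices with γ(k) = u_k and γ(k−1) ≠ γ(k) (horizontal updates). If |H(y) − H(y+e)| ≤ K for all y ∈ ℤ^d and e ∈ N, then for every x ∈ ℤ^d, f_n(x) equals the minimum of W_K(γ) + H(γ(0)) over all lattice paths γ for u starting at x. -/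

import Mathlib

open Classical MeasureTheory

noncomputable section

/-- The set `N` of nearest neighbors of the origin in `ℤ^d`. -/
def nbr (d : ℕ) : Set (Fin d → ℤ) :=
  {v | ∃ i : Fin d, v = Pi.single i 1 ∨ v = Pi.single i (-1)}

/-- The set `N₀` of nearest neighbors of the origin, together with the origin. -/
def nbr0 (d : ℕ) : Set (Fin d → ℤ) := nbr d ∪ {0}

/-- One RSOS update at site `x`: the height at `x` increases by one iff it is
no larger than all neighboring heights. -/
def rsosStep {d : ℕ} (f : (Fin d → ℤ) → ℤ) (x : Fin d → ℤ) : (Fin d → ℤ) → ℤ :=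
  fun y => if y = x ∧ ∀ e ∈ nbr d, f x ≤ f (x + e) then f x + 1 else f y

/-- RSOS heights after applying the update list `u` (in chronological order)
to the initial condition `H`. -/
def RSOS {d : ℕ} (u : List (Fin d → ℤ)) (H : (Fin d → ℤ) → ℤ) : (Fin d → ℤ) → ℤ :=
  u.foldl rsosStep H

/-- A lattice path for the update list `u` starting at `x`:
`γ n = x` (where `n = u.length`) and for every `1 ≤ k ≤ n` (indexed here by `k+1`
with `k < n`), either the path stays, or the `k`-th update occurs at the path's
position and the path moves to a nearest neighbor (backwards in time). -/
def IsLatticePath {d : ℕ} (u : List (Fin d → ℤ)) (x : Fin d → ℤ) (γ : ℕ → (Fin d → ℤ)) : Prop :=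
  γ u.length = x ∧
    ∀ k < u.length, γ k = γ (k + 1) ∨ (γ (k + 1) = u.getD k 0 ∧ γ k - γ (k + 1) ∈ nbr d)

/-- The weight of a lattice path: the number of indices `1 ≤ j ≤ n` with `γ j = u_j`. -/
def pathWeight {d : ℕ} (u : List (Fin d → ℤ)) (γ : ℕ → (Fin d → ℤ)) : ℕ :=
  ((Finset.range u.length).filter fun k => γ (k + 1) = u.getD k 0).card

/-- The ℓ¹ norm on `ℤ^d`. -/
def l1 {d : ℕ} (v : Fin d → ℤ) : ℕ := ∑ i, (v i).natAbs

/-- One `K`-RSOS update at site `x`: the height increases by one iff afterwards all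
adjacent differences are still bounded by `K`. -/
def rsosStepK {d : ℕ} (K : ℕ) (f : (Fin d → ℤ) → ℤ) (x : Fin d → ℤ) :
    (Fin d → ℤ) → ℤ :=
  fun y => if y = x ∧ ∀ e ∈ nbr d, f x + 1 ≤ f (x + e) + K then f x + 1 else f y

/-- `K`-RSOS heights after applying the update list `u` to `H`. -/
def RSOSK {d : ℕ} (K : ℕ) (u : List (Fin d → ℤ)) (H : (Fin d → ℤ) → ℤ) :
    (Fin d → ℤ) → ℤ :=
  u.foldl (rsosStepK K) H

/-- The `K`-weight of a lattice path: the number of vertical updates on the path plus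
`K` times the number of horizontal updates on the path. -/
def kWeight {d : ℕ} (K : ℕ) (u : List (Fin d → ℤ)) (γ : ℕ → (Fin d → ℤ)) : ℕ :=
  ((Finset.range u.length).filter fun k =>
      γ (k + 1) = u.getD k 0 ∧ γ k = γ (k + 1)).card +
    K * ((Finset.range u.length).filter fun k =>
      γ (k + 1) = u.getD k 0 ∧ γ k ≠ γ (k + 1)).card

/- ### Auxiliary lemmas -/

lemma nbr_neg' {d : ℕ} {e : Fin d → ℤ} (h : e ∈ nbr d) : -e ∈ nbr d := by
  obtain ⟨i, h | h⟩ := h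
  · exact ⟨i, Or.inr (by rw [h]; ext j; by_cases hj : j = i <;> simp [hj, Pi.single_apply])⟩
  · exact ⟨i, Or.inl (by rw [h]; ext j; by_cases hj : j = i <;> simp [hj, Pi.single_apply])⟩

lemma nbr_ne_zero' {d : ℕ} {e : Fin d → ℤ} (h : e ∈ nbr d) : e ≠ 0 := by
  obtain ⟨i, h | h⟩ := h <;> intro h0 <;> rw [h0] at h <;>
    · have := congrFun h i; simp at this

/-- The gradient bound is preserved by one `K`-RSOS step. -/
lemma grad_rsosStepK {d K : ℕ} {H : (Fin d → ℤ) → ℤ}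
    (hH : ∀ y : Fin d → ℤ, ∀ e ∈ nbr d, |H y - H (y + e)| ≤ (K : ℤ)) (a : Fin d → ℤ) :
    ∀ y : Fin d → ℤ, ∀ e ∈ nbr d, |rsosStepK K H a y - rsosStepK K H a (y + e)| ≤ (K : ℤ) := by
  intro y e he
  obtain ⟨h1, h2⟩ := abs_le.mp (hH y e he)
  have hKnn : (0 : ℤ) ≤ (K : ℤ) := Int.natCast_nonneg K
  by_cases hC : ∀ e' ∈ nbr d, H a + 1 ≤ H (a + e') + (K : ℤ)
  · by_cases hy : y = a
    · subst hy
      have hne : y + e ≠ y := by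
        intro h
        apply nbr_ne_zero' he
        funext j
        have := congrFun h j
        simp only [Pi.add_apply] at this
        simpa using this
      rw [show rsosStepK K H y y = H y + 1 by simp only [rsosStepK]; rw [if_pos ⟨trivial, hC⟩],
        show rsosStepK K H y (y + e) = H (y + e) by simp [rsosStepK, hne]]
      have h3 := hC e he
      rw [abs_le]
      constructor <;> linarith
    · by_cases hne : y + e = a
      · have hy' : a + -e = y := by rw [← hne]; abel
        rw [show rsosStepK K H a y = H y by simp [rsosStepK, hy],
          show rsosStepK K H a (y + e) = H a + 1 by
            rw [hne]; simp only [rsosStepK]; rw [if_pos ⟨trivial, hC⟩]]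
        have h3 := hC (-e) (nbr_neg' he)
        rw [hy'] at h3
        rw [hne] at h1 h2
        rw [abs_le]
        constructor <;> linarith
      · rw [show rsosStepK K H a y = H y by simp [rsosStepK, hy],
          show rsosStepK K H a (y + e) = H (y + e) by simp [rsosStepK, hne]]
        exact hH y e he
  · have hid : ∀ z, rsosStepK K H a z = H z := by
      intro z; simp only [rsosStepK]; rw [if_neg (fun h => hC h.2)]
    rw [hid, hid]
    exact hH y e he

/-- Lower bound on the initial height along a lattice path. -/
lemma path_lb {d K : ℕ} {H : (Fin d → ℤ) → ℤ}
    (hH : ∀ y : Fin d → ℤ, ∀ e ∈ nbr d, |H y - H (y + e)| ≤ (K : ℤ))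
    {u : List (Fin d → ℤ)} {x : Fin d → ℤ} {γ : ℕ → Fin d → ℤ}
    (hγ : IsLatticePath u x γ) : H x - (K : ℤ) * u.length ≤ H (γ 0) := by
  have key : ∀ m k, k + m = u.length → H x - (K : ℤ) * m ≤ H (γ k) := by
    intro m
    induction m with
    | zero =>
      intro k hk
      simp only [Nat.add_zero] at hk
      subst hk
      rw [hγ.1]
      simp
    | succ m ih =>
      intro k hk
      have h2 := ih (k + 1) (by omega)
      have step : H (γ (k + 1)) - (K : ℤ) ≤ H (γ k) := by
        rcases hγ.2 k (by omega) with h | ⟨_, he⟩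
        · rw [h]; linarith [Int.natCast_nonneg K]
        · have h3 := abs_le.mp (hH (γ (k + 1)) _ he)
          have heq : γ (k + 1) + (γ k - γ (k + 1)) = γ k := by abel
          rw [heq] at h3
          linarith [h3.1]
      push_cast
      push_cast at h2
      linarith
  simpa using key u.length 0 (by omega)

/-- The cost of the first step of a lattice path. -/
def stepCost {d : ℕ} (K : ℕ) (a y0 y1 : Fin d → ℤ) : ℕ :=
  (if y1 = a ∧ y0 = y1 then 1 else 0) + K * (if y1 = a ∧ y0 ≠ y1 then 1 else 0)

lemma kWeight_eq_sum {d K : ℕ} (u : List (Fin d → ℤ)) (γ : ℕ → Fin d → ℤ) :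
    kWeight K u γ = ∑ k ∈ Finset.range u.length,
      ((if γ (k + 1) = u.getD k 0 ∧ γ k = γ (k + 1) then 1 else 0)
        + K * (if γ (k + 1) = u.getD k 0 ∧ γ k ≠ γ (k + 1) then 1 else 0)) := by
  rw [kWeight, Finset.sum_add_distrib, ← Finset.mul_sum,
    Finset.card_filter, Finset.card_filter]

lemma kWeight_cons {d K : ℕ} (a : Fin d → ℤ) (u : List (Fin d → ℤ)) (γ : ℕ → Fin d → ℤ) :
    kWeight K (a :: u) γ =
      stepCost K a (γ 0) (γ 1) + kWeight K u (fun k => γ (k + 1)) := by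
  rw [kWeight_eq_sum, kWeight_eq_sum, List.length_cons, Finset.sum_range_succ']
  simp only [List.getD_cons_succ, List.getD_cons_zero, stepCost]
  exact Nat.add_comm _ _

lemma isLatticePath_cons {d : ℕ} {a : Fin d → ℤ} {u : List (Fin d → ℤ)} {x : Fin d → ℤ}
    {γ : ℕ → Fin d → ℤ} (hγ : IsLatticePath (a :: u) x γ) :
    IsLatticePath u x (fun k => γ (k + 1)) ∧
      (γ 0 = γ 1 ∨ (γ 1 = a ∧ γ 0 - γ 1 ∈ nbr d)) := by
  obtain ⟨h1, h2⟩ := hγ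
  refine ⟨⟨h1, fun k hk => ?_⟩, ?_⟩
  · have := h2 (k + 1) (by simpa [List.length_cons] using Nat.succ_lt_succ hk)
    simpa using this
  · have := h2 0 (by simp)
    simpa using this

lemma stepK_le {d K : ℕ} {H : (Fin d → ℤ) → ℤ}
    (hH : ∀ y : Fin d → ℤ, ∀ e ∈ nbr d, |H y - H (y + e)| ≤ (K : ℤ))
    (a y0 y1 : Fin d → ℤ)
    (h : y0 = y1 ∨ (y1 = a ∧ y0 - y1 ∈ nbr d)) :
    rsosStepK K H a y1 ≤ (stepCost K a y0 y1 : ℤ) + H y0 := by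
  by_cases h1a : y1 = a
  · subst h1a
    by_cases h01 : y0 = y1
    · subst h01
      have hc : stepCost K y0 y0 y0 = 1 := by simp [stepCost]
      rw [hc]
      simp only [rsosStepK]
      split_ifs with hcc
      · push_cast; linarith
      · push_cast; linarith
    · obtain h | ⟨_, he⟩ := h
      · exact absurd h h01
      have hc : stepCost K y1 y0 y1 = K := by simp [stepCost, h01]
      rw [hc]
      have hy0 : y1 + (y0 - y1) = y0 := by abel
      simp only [rsosStepK]
      split_ifs with hcc
      · have := hcc.2 _ he
        rw [hy0] at this
        linarith
      · have h3 := abs_le.mp (hH y1 _ he)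
        rw [hy0] at h3
        linarith [h3.2, Int.natCast_nonneg K]
  · obtain h | ⟨h, _⟩ := h
    · subst h
      have hc : stepCost K a y0 y0 = 0 := by simp [stepCost, h1a]
      rw [hc]
      have : rsosStepK K H a y0 = H y0 := by simp [rsosStepK, h1a]
      rw [this]
      simp
    · exact absurd h h1a

lemma stepK_exists {d K : ℕ} {H : (Fin d → ℤ) → ℤ} (a y1 : Fin d → ℤ) :
    ∃ y0, (y0 = y1 ∨ (y1 = a ∧ y0 - y1 ∈ nbr d)) ∧
      (stepCost K a y0 y1 : ℤ) + H y0 ≤ rsosStepK K H a y1 := by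
  by_cases h1a : y1 = a
  · subst h1a
    by_cases hC : ∀ e ∈ nbr d, H y1 + 1 ≤ H (y1 + e) + (K : ℤ)
    · refine ⟨y1, Or.inl rfl, ?_⟩
      have hc : stepCost K y1 y1 y1 = 1 := by simp [stepCost]
      have hv : rsosStepK K H y1 y1 = H y1 + 1 := by
        simp only [rsosStepK]; rw [if_pos ⟨trivial, hC⟩]
      rw [hc, hv]
      push_cast
      linarith
    · have hC' := hC
      push_neg at hC'
      obtain ⟨e, he, hlt⟩ := hC'
      have hne : y1 + e ≠ y1 := by
        intro h
        apply nbr_ne_zero' he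
        funext j
        have := congrFun h j
        simp only [Pi.add_apply] at this
        simpa using this
      refine ⟨y1 + e, Or.inr ⟨rfl, by rw [show y1 + e - y1 = e by abel]; exact he⟩, ?_⟩
      have hc : stepCost K y1 (y1 + e) y1 = K := by simp [stepCost, hne]
      have hv : rsosStepK K H y1 y1 = H y1 := by
        simp only [rsosStepK]; rw [if_neg (fun h => hC h.2)]
      rw [hc, hv]
      linarith
  · refine ⟨y1, Or.inl rfl, ?_⟩
    have hc : stepCost K a y1 y1 = 0 := by simp [stepCost, h1a]
    have hv : rsosStepK K H a y1 = H y1 := by simp [rsosStepK, h1a]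
    rw [hc, hv]
    simp

/-- minimal weight characterization for `K`-restricted solid-on-solid:
if the initial condition has adjacent differences bounded by `K`, then the `K`-RSOS
height at `x` equals the minimum of `W_K(γ) + H(γ 0)` over all lattice paths `γ`
for `u` starting at `x`. -/
theorem rsosK_eq_min_kweight {d : ℕ} (hd : 1 ≤ d) (K : ℕ) (hK : 1 ≤ K)
    (H : (Fin d → ℤ) → ℤ)
    (hH : ∀ y : Fin d → ℤ, ∀ e ∈ nbr d, |H y - H (y + e)| ≤ (K : ℤ))
    (u : List (Fin d → ℤ)) (x : Fin d → ℤ) :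
    RSOSK K u H x = sInf {w : ℤ | ∃ γ : ℕ → (Fin d → ℤ), IsLatticePath u x γ ∧
      w = (kWeight K u γ : ℤ) + H (γ 0)} := by
  induction u generalizing H hH with
  | nil =>
    have hset : {w : ℤ | ∃ γ : ℕ → (Fin d → ℤ), IsLatticePath [] x γ ∧
        w = (kWeight K [] γ : ℤ) + H (γ 0)} = {H x} := by
      ext w
      simp only [Set.mem_setOf_eq, Set.mem_singleton_iff]
      constructor
      · rintro ⟨γ, ⟨hγ1, _⟩, rfl⟩
        have h0 : γ 0 = x := hγ1
        have hw : kWeight K [] γ = 0 := by simp [kWeight]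
        rw [hw, h0]
        simp
      · rintro rfl
        refine ⟨fun _ => x, ⟨rfl, fun k hk => by simp at hk⟩, ?_⟩
        simp [kWeight]
    rw [hset, csInf_singleton]
    rfl
  | cons a u ih =>
    have hH' := grad_rsosStepK hH a
    have hmain : RSOSK K (a :: u) H x = RSOSK K u (rsosStepK K H a) x := rfl
    rw [hmain, ih (rsosStepK K H a) hH']
    have hne : ({w : ℤ | ∃ γ : ℕ → (Fin d → ℤ), IsLatticePath (a :: u) x γ ∧
        w = (kWeight K (a :: u) γ : ℤ) + H (γ 0)}).Nonempty :=
      ⟨_, ⟨fun _ => x, ⟨rfl, fun k _ => Or.inl rfl⟩, rfl⟩⟩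
    have hne' : ({w : ℤ | ∃ γ : ℕ → (Fin d → ℤ), IsLatticePath u x γ ∧
        w = (kWeight K u γ : ℤ) + rsosStepK K H a (γ 0)}).Nonempty :=
      ⟨_, ⟨fun _ => x, ⟨rfl, fun k _ => Or.inl rfl⟩, rfl⟩⟩
    have hbdd : BddBelow {w : ℤ | ∃ γ : ℕ → (Fin d → ℤ), IsLatticePath (a :: u) x γ ∧
        w = (kWeight K (a :: u) γ : ℤ) + H (γ 0)} := by
      refine ⟨H x - (K : ℤ) * (a :: u).length, ?_⟩
      rintro w ⟨γ, hγ, rfl⟩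
      have h1 := path_lb hH hγ
      have h2 : (0 : ℤ) ≤ (kWeight K (a :: u) γ : ℤ) := Int.natCast_nonneg _
      linarith
    have hbdd' : BddBelow {w : ℤ | ∃ γ : ℕ → (Fin d → ℤ), IsLatticePath u x γ ∧
        w = (kWeight K u γ : ℤ) + rsosStepK K H a (γ 0)} := by
      refine ⟨rsosStepK K H a x - (K : ℤ) * u.length, ?_⟩
      rintro w ⟨γ, hγ, rfl⟩
      have h1 := path_lb hH' hγ
      have h2 : (0 : ℤ) ≤ (kWeight K u γ : ℤ) := Int.natCast_nonneg _
      linarith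
    apply le_antisymm
    · refine le_csInf hne ?_
      rintro w ⟨γ, hγ, rfl⟩
      obtain ⟨hγ', hstep⟩ := isLatticePath_cons hγ
      refine le_trans (csInf_le hbdd' ⟨fun k => γ (k + 1), hγ', rfl⟩) ?_
      rw [kWeight_cons]
      push_cast
      have hle := stepK_le hH a (γ 0) (γ 1) hstep
      linarith
    · refine le_csInf hne' ?_
      rintro w ⟨γ', hγ', rfl⟩
      obtain ⟨y0, hstep0, hle⟩ := stepK_exists (K := K) (H := H) a (γ' 0)
      classical
      let γ : ℕ → Fin d → ℤ := fun k => Nat.casesOn k y0 (fun j => γ' j)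
      have hshift : (fun k => γ (k + 1)) = γ' := funext fun k => rfl
      have hpath : IsLatticePath (a :: u) x γ := by
        refine ⟨hγ'.1, fun k hk => ?_⟩
        cases k with
        | zero =>
          exact hstep0
        | succ j =>
          have := hγ'.2 j (by simpa [List.length_cons] using hk)
          simpa using this
      refine le_trans (csInf_le hbdd ⟨γ, hpath, rfl⟩) ?_
      rw [kWeight_cons, hshift]
      have h0 : γ 0 = y0 := rfl
      have h1 : γ 1 = γ' 0 := rfl
      rw [h0, h1]
      push_cast
      linarith

end
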